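/- Let C and C' be copulas with C ≤ C' pointwise (concordance order), and let (X,Y), (X',Y') be random vectors with copulas C, C' respectively, where F_X and F_{X'} are continuous and F_Y = F_{Y'}. Then for all α, β ∈ (0,1), CoVaR_{α,β}(Y|X) ≤ CoVaR_{α,β}(Y'|X'), where CoVaR_{α,β}(Y|X) is the β-quantile of the law of Y conditional on {X ≥ VaR_α(X)}. -/

import Mathlib

open MeasureTheory Set

/-- Generalized inverse (left-continuous quantile function) F^←(p) = inf {x : F x ≥ p}. -/
noncomputable def qf (F : ℝ → ℝ) (p : ℝ) : ℝ := sInf {x | p ≤ F x}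

/-- Distribution function of a random variable. -/
noncomputable def rvCdf {Ω : Type*} [MeasurableSpace Ω] (μ : Measure Ω) (X : Ω → ℝ) (x : ℝ) : ℝ :=
  (μ {ω | X ω ≤ x}).toReal

/-- CoVaR_{α,β}(Y|X): β-quantile of the conditional law of Y given {X ≥ VaR_α(X)},
with VaR_α(X) = F_X^←(α). -/
noncomputable def covar {Ω : Type*} [MeasurableSpace Ω] (μ : Measure Ω) (X Y : Ω → ℝ)
    (α β : ℝ) : ℝ :=
  qf (fun y => (μ ({ω | Y ω ≤ y} ∩ {ω | qf (rvCdf μ X) α ≤ X ω})).toReal /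
        (μ {ω | qf (rvCdf μ X) α ≤ X ω}).toReal) β

/-!
Let `q = VaR_α(X)`. Continuity of `F_X` gives `F_X(q) = α` and `P(X = q) = 0`, hence
`P(X ≥ q) = 1 - α`, and the conditional law of `Y` given `{X ≥ q}` has distribution function
`y ↦ (F_Y(y) - C(α, F_Y(y))) / (1 - α)`. The same holds for `(X', Y')` with `C'`; as `F_Y = F_{Y'}`
and `C ≤ C'`, the first conditional distribution function dominates the second, and quantiles are
antitone in the distribution function.
-/

open Filter Topology ProbabilityTheory

section Quantile

variable {F G : ℝ → ℝ} {p : ℝ}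

lemma bddBelow_setOf_le_of_tendsto_atBot (hF : Tendsto F atBot (𝓝 0)) (hp : 0 < p) :
    BddBelow {x | p ≤ F x} := by
  obtain ⟨x₀, hx₀⟩ := eventually_atBot.1 (hF.eventually (eventually_lt_nhds hp))
  refine ⟨x₀, fun x hx => le_of_not_ge fun hxx₀ => ?_⟩
  exact (hx₀ x hxx₀).not_ge hx

lemma nonempty_setOf_le_of_tendsto_atTop (hF : Tendsto F atTop (𝓝 1)) (hp : p < 1) :
    {x | p ≤ F x}.Nonempty :=
  (hF.eventually (eventually_gt_nhds hp)).exists.imp fun _ h => h.le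

lemma apply_qf_of_continuous (hF : Continuous F) (h0 : Tendsto F atBot (𝓝 0))
    (h1 : Tendsto F atTop (𝓝 1)) (hp : p ∈ Ioo 0 1) : F (qf F p) = p := by
  have hbdd := bddBelow_setOf_le_of_tendsto_atBot h0 hp.1
  have hle : p ≤ F (qf F p) := (isClosed_le continuous_const hF).csInf_mem
    (nonempty_setOf_le_of_tendsto_atTop h1 hp.2) hbdd
  have hlt : ∀ x < qf F p, F x ≤ p := fun x hx =>
    (not_le.1 (notMem_of_lt_csInf (s := {x | p ≤ F x}) hx hbdd)).le
  have hleft : Tendsto F (𝓝[<] qf F p) (𝓝 (F (qf F p))) :=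
    hF.continuousAt.tendsto.mono_left nhdsWithin_le_nhds
  exact le_antisymm (le_of_tendsto hleft (eventually_nhdsWithin_of_forall hlt)) hle

lemma qf_le_qf_of_le (hG : Tendsto G atTop (𝓝 1)) (hF : Tendsto F atBot (𝓝 0))
    (hGF : ∀ x, G x ≤ F x) (hp : p ∈ Ioo 0 1) : qf F p ≤ qf G p :=
  csInf_le_csInf (bddBelow_setOf_le_of_tendsto_atBot hF hp.1)
    (nonempty_setOf_le_of_tendsto_atTop hG hp.2) fun x hx => le_trans hx (hGF x)

end Quantile

section Cdf

variable {Ω : Type*} [MeasurableSpace Ω] {μ : Measure Ω} {X : Ω → ℝ} {q α : ℝ}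

lemma rvCdf_cond_eq {B : Set Ω} (hB : MeasurableSet B) (Y : Ω → ℝ) (y : ℝ) :
    rvCdf μ[|B] Y y = μ.real ({ω | Y ω ≤ y} ∩ B) / μ.real B := by
  rw [rvCdf, cond_apply hB, ENNReal.toReal_mul, ENNReal.toReal_inv, inter_comm, div_eq_inv_mul]
  rfl

lemma covar_eq_qf_rvCdf_cond (hX : Measurable X) (Y : Ω → ℝ) (α β : ℝ) :
    covar μ X Y α β = qf (rvCdf μ[|{ω | qf (rvCdf μ X) α ≤ X ω}] Y) β := by
  rw [covar]
  congr 1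
  funext y
  rw [rvCdf_cond_eq (measurableSet_le measurable_const hX)]
  rfl

variable [IsProbabilityMeasure μ]

lemma rvCdf_eq_cdf_map (hX : Measurable X) : rvCdf μ X = cdf (μ.map X) := by
  have := Measure.isProbabilityMeasure_map (μ := μ) hX.aemeasurable
  funext x
  rw [cdf_eq_real, map_measureReal_apply hX measurableSet_Iic]
  rfl

lemma tendsto_rvCdf_atTop (hX : Measurable X) : Tendsto (rvCdf μ X) atTop (𝓝 1) := by
  have := Measure.isProbabilityMeasure_map (μ := μ) hX.aemeasurable
  rw [rvCdf_eq_cdf_map hX]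
  exact tendsto_cdf_atTop _

lemma tendsto_rvCdf_atBot (hX : Measurable X) : Tendsto (rvCdf μ X) atBot (𝓝 0) := by
  have := Measure.isProbabilityMeasure_map (μ := μ) hX.aemeasurable
  rw [rvCdf_eq_cdf_map hX]
  exact tendsto_cdf_atBot _

lemma rvCdf_mem_Icc (X : Ω → ℝ) (x : ℝ) : rvCdf μ X x ∈ Icc 0 1 :=
  ⟨measureReal_nonneg, measureReal_le_one⟩

lemma rvCdf_qf_eq (hX : Measurable X) (hFX : Continuous (rvCdf μ X)) (hα : α ∈ Ioo 0 1) :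
    rvCdf μ X (qf (rvCdf μ X) α) = α :=
  apply_qf_of_continuous hFX (tendsto_rvCdf_atBot hX) (tendsto_rvCdf_atTop hX) hα

lemma measure_preimage_singleton_eq_zero (hX : Measurable X)
    (hFX : ContinuousAt (rvCdf μ X) q) : μ (X ⁻¹' {q}) = 0 := by
  have := Measure.isProbabilityMeasure_map (μ := μ) hX.aemeasurable
  rw [← Measure.map_apply hX (measurableSet_singleton q), ← measure_cdf (μ.map X),
    StieltjesFunction.measure_singleton, ← rvCdf_eq_cdf_map hX,
    hFX.continuousWithinAt.leftLim_eq, sub_self, ENNReal.ofReal_zero]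

lemma measureReal_inter_le_eq_sub (hX : Measurable X) (hq : μ (X ⁻¹' {q}) = 0) (A : Set Ω) :
    μ.real (A ∩ {ω | q ≤ X ω}) = μ.real A - μ.real (A ∩ {ω | X ω ≤ q}) := by
  have hae : (A ∩ {ω | q ≤ X ω} : Set Ω) =ᵐ[μ] (A \ {ω | X ω ≤ q} : Set Ω) := by
    refine eventuallyEq_set.2 ?_
    filter_upwards [measure_eq_zero_iff_ae_notMem.1 hq] with ω hω
    simp only [mem_preimage, mem_singleton_iff] at hω
    simp [le_iff_lt_or_eq, eq_comm (a := q), hω]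
  rw [measureReal_congr hae]
  exact eq_sub_of_add_eq (measureReal_sdiff_add_inter (measurableSet_le hX measurable_const))

lemma measureReal_qf_le (hX : Measurable X) (hFX : Continuous (rvCdf μ X)) (hα : α ∈ Ioo 0 1) :
    μ.real {ω | qf (rvCdf μ X) α ≤ X ω} = 1 - α := by
  rw [← univ_inter {ω | _ ≤ X ω}, measureReal_inter_le_eq_sub hX
    (measure_preimage_singleton_eq_zero hX hFX.continuousAt), univ_inter, probReal_univ]
  exact congrArg (1 - ·) (rvCdf_qf_eq hX hFX hα)

lemma isProbabilityMeasure_cond_qf_le (hX : Measurable X) (hFX : Continuous (rvCdf μ X))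
    (hα : α ∈ Ioo 0 1) : IsProbabilityMeasure μ[|{ω | qf (rvCdf μ X) α ≤ X ω}] := by
  refine cond_isProbabilityMeasure fun h => ?_
  have := measureReal_qf_le hX hFX hα
  rw [measureReal_def, h, ENNReal.toReal_zero] at this
  linarith [hα.2]

lemma rvCdf_cond_qf_le (hX : Measurable X) (hFX : Continuous (rvCdf μ X)) (hα : α ∈ Ioo 0 1)
    (Y : Ω → ℝ) (y : ℝ) :
    rvCdf μ[|{ω | qf (rvCdf μ X) α ≤ X ω}] Y y
      = (rvCdf μ Y y - μ.real {ω | X ω ≤ qf (rvCdf μ X) α ∧ Y ω ≤ y}) / (1 - α) := by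
  rw [rvCdf_cond_eq (measurableSet_le measurable_const hX), measureReal_qf_le hX hFX hα,
    measureReal_inter_le_eq_sub hX (measure_preimage_singleton_eq_zero hX hFX.continuousAt),
    inter_comm, ofPred_and]
  rfl

end Cdf

/-- C ⪯ C' (concordance order) with continuous F_X, F_{X'} and equal
Y-margins implies CoVaR_{α,β}(Y|X) ≤ CoVaR_{α,β}(Y'|X') for all α, β ∈ (0,1). -/
theorem covar_mono_of_concordance
    {Ω Ω' : Type*} [MeasurableSpace Ω] [MeasurableSpace Ω']
    (μ : Measure Ω) (ν : Measure Ω') [IsProbabilityMeasure μ] [IsProbabilityMeasure ν]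
    (X Y : Ω → ℝ) (X' Y' : Ω' → ℝ)
    (hX : Measurable X) (hY : Measurable Y) (hX' : Measurable X') (hY' : Measurable Y')
    (C C' : ℝ → ℝ → ℝ)
    (hSklar : ∀ x y, (μ {ω | X ω ≤ x ∧ Y ω ≤ y}).toReal = C (rvCdf μ X x) (rvCdf μ Y y))
    (hSklar' : ∀ x y, (ν {ω | X' ω ≤ x ∧ Y' ω ≤ y}).toReal =
      C' (rvCdf ν X' x) (rvCdf ν Y' y))
    (hFXcont : Continuous (rvCdf μ X)) (hFX'cont : Continuous (rvCdf ν X'))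
    (hYY' : rvCdf μ Y = rvCdf ν Y')
    (hCC' : ∀ u ∈ Icc (0:ℝ) 1, ∀ v ∈ Icc (0:ℝ) 1, C u v ≤ C' u v)
    (α β : ℝ) (hα : α ∈ Ioo (0:ℝ) 1) (hβ : β ∈ Ioo (0:ℝ) 1) :
    covar μ X Y α β ≤ covar ν X' Y' α β := by
  have := isProbabilityMeasure_cond_qf_le hX hFXcont hα
  have := isProbabilityMeasure_cond_qf_le hX' hFX'cont hα
  rw [covar_eq_qf_rvCdf_cond hX, covar_eq_qf_rvCdf_cond hX']
  refine qf_le_qf_of_le (tendsto_rvCdf_atTop hY') (tendsto_rvCdf_atBot hY) (fun y => ?_) hβ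
  rw [rvCdf_cond_qf_le hX hFXcont hα, rvCdf_cond_qf_le hX' hFX'cont hα, measureReal_def,
    measureReal_def, hSklar, hSklar', rvCdf_qf_eq hX hFXcont hα, rvCdf_qf_eq hX' hFX'cont hα,
    hYY']
  have h1α : 0 < 1 - α := sub_pos.2 hα.2
  gcongr
  exact hCC' α (Ioo_subset_Icc_self hα) _ (rvCdf_mem_Icc Y' y)
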